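/- Let N be a finite set and v : Set N → ℝ such that I_and(S) = 0 for all S with |S| ≥ 2. Then v is additive on disjoint increments: for all T ⊆ N, v(T) = v(∅) + ∑_{i ∈ T} (v({i}) − v(∅)). -/

import Mathlib

open Finset MeasureTheory

variable {N : Type*} [Fintype N] [DecidableEq N]

noncomputable def Iand (v : Finset N → ℝ) (S : Finset N) : ℝ :=
  ∑ T ∈ S.powerset, (-1 : ℝ) ^ (S.card - T.card) * v T

noncomputable def Ior (v : Finset N → ℝ) (S : Finset N) : ℝ :=
  if S = ∅ then v ∅
  else -∑ T ∈ S.powerset, (-1 : ℝ) ^ (S.card - T.card) * v (Finset.univ \ T)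

/-! Möbius inversion on the subset lattice gives `v T = ∑_{S ⊆ T} I_and(S)`, because the
alternating sum `∑_{U ⊆ S ⊆ T} (-1)^{|S|-|U|}` vanishes unless `U = T`. When all interactions of
order at least two vanish, only `S = ∅` and the singletons survive, and
`I_and(∅) = v(∅)`, `I_and({i}) = v({i}) - v(∅)`. -/

theorem Finset.sum_Icc_neg_one_pow_card_sub {α R : Type*} [DecidableEq α] [Ring R]
    {U T : Finset α} (hUT : U ⊆ T) :
    ∑ S ∈ Icc U T, (-1 : R) ^ (#S - #U) = if U = T then 1 else 0 := by
  have hdisj : ∀ W ∈ (T \ U).powerset, Disjoint U W := fun W hW =>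
    disjoint_of_subset_right (mem_powerset.1 hW) disjoint_sdiff
  have hinj : Set.InjOn (U ∪ ·) (T \ U).powerset := fun W hW W' hW' hWW' => by
    rw [← union_sdiff_cancel_left (hdisj W hW), ← union_sdiff_cancel_left (hdisj W' hW')]
    exact congrArg (· \ U) hWW'
  have hcard : ∀ W ∈ (T \ U).powerset, #(U ∪ W) - #U = #W := fun W hW => by
    rw [card_union_of_disjoint (hdisj W hW)]
    omega
  have halt := congrArg (Int.cast : ℤ → R) (sum_powerset_neg_one_pow_card (x := T \ U))
  push_cast at halt
  rw [Icc_eq_image_powerset hUT, sum_image hinj, sum_congr rfl fun W hW => by rw [hcard W hW],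
    halt]
  exact if_congr (sdiff_eq_empty_iff_subset.trans hUT.ge_iff_eq) rfl rfl

theorem Finset.sum_powerset_eq_add_sum_singleton {α M : Type*} [DecidableEq α] [AddCommMonoid M]
    (T : Finset α) (f : Finset α → M) (hf : ∀ S ⊆ T, 2 ≤ #S → f S = 0) :
    ∑ S ∈ T.powerset, f S = f ∅ + ∑ i ∈ T, f {i} := by
  have hsub : insert ∅ (T.map ⟨singleton, singleton_injective⟩) ⊆ T.powerset := by
    simp [subset_iff]
  rw [← sum_subset hsub, sum_insert (by simp), sum_map]
  · rfl
  intro S hST hS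
  rw [mem_powerset] at hST
  simp only [mem_insert, mem_map, not_or, not_exists, not_and] at hS
  obtain ⟨hne, hsingle⟩ := hS
  refine hf S hST (not_lt.1 fun hlt => ?_)
  have hpos := card_pos.2 (nonempty_iff_ne_empty.2 hne)
  obtain ⟨a, rfl⟩ := card_eq_one.1 (show #S = 1 by omega)
  exact hsingle a (hST (mem_singleton_self a)) rfl

theorem Iand_empty {ι : Type*} (v : Finset ι → ℝ) : Iand v ∅ = v ∅ := by
  simp [Iand]

theorem Iand_singleton {ι : Type*} (v : Finset ι → ℝ) (i : ι) : Iand v {i} = v {i} - v ∅ := by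
  classical
  rw [Iand, ← insert_empty_eq, sum_powerset_insert (notMem_empty i)]
  simp [sub_eq_neg_add]

theorem sum_powerset_Iand {ι : Type*} [DecidableEq ι] (v : Finset ι → ℝ) (T : Finset ι) :
    ∑ S ∈ T.powerset, Iand v S = v T := by
  have hswap : ∀ S U, S ∈ T.powerset ∧ U ∈ S.powerset ↔ S ∈ Icc U T ∧ U ∈ T.powerset := by
    intro S U
    simp only [mem_powerset, mem_Icc]
    exact ⟨fun ⟨hST, hUS⟩ => ⟨⟨hUS, hST⟩, hUS.trans hST⟩, fun ⟨⟨hUS, hST⟩, _⟩ => ⟨hST, hUS⟩⟩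
  calc ∑ S ∈ T.powerset, Iand v S
      = ∑ U ∈ T.powerset, (∑ S ∈ Icc U T, (-1 : ℝ) ^ (#S - #U)) * v U := by
        simp only [Iand, sum_mul]
        exact sum_comm' hswap
    _ = ∑ U ∈ T.powerset, if U = T then v U else 0 := by
        refine sum_congr rfl fun U hU => ?_
        rw [sum_Icc_neg_one_pow_card_sub (mem_powerset.1 hU), ite_mul, one_mul, zero_mul]
    _ = v T := by rw [sum_ite_eq' _ _ v, if_pos (mem_powerset_self T)]

theorem no_high_order_interactions_additive (v : Finset N → ℝ)
    (h : ∀ S : Finset N, 2 ≤ S.card → Iand v S = 0) :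
    ∀ T : Finset N, v T = v ∅ + ∑ i ∈ T, (v {i} - v ∅) := by
  intro T
  calc v T = ∑ S ∈ T.powerset, Iand v S := (sum_powerset_Iand v T).symm
    _ = Iand v ∅ + ∑ i ∈ T, Iand v {i} :=
        sum_powerset_eq_add_sum_singleton T (Iand v) fun S _ hS => h S hS
    _ = v ∅ + ∑ i ∈ T, (v {i} - v ∅) := by simp only [Iand_empty, Iand_singleton]
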